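/- arXiv:math/0703796 — 2 statements merged into one kernel-verified Lean document; each statement's English description precedes it below -/
import Mathlib

section
/- The pushforward of Lebesgue measure on ℝⁿ∖{0} under η(x) = xxᵗ is a quasi-invariant measure μ₁ on the rank-one boundary orbit: for every g ∈ GL(n,ℝ), the pushforward of μ₁ under X ↦ gXgᵗ equals |det g|⁻¹ μ₁ (equivalently g*μ₁ = |det g| μ₁ in the paper's convention). -/
open Matrix MeasureTheory

/-- The product `σ`-algebra on matrices (matrices are functions `Fin n → Fin n → ℝ`). -/
noncomputable instance matrixMeasurableSpace (n : ℕ) :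
    MeasurableSpace (Matrix (Fin n) (Fin n) ℝ) :=
  inferInstanceAs (MeasurableSpace (Fin n → Fin n → ℝ))

theorem pushforward_measure_quasi_invariant (n : ℕ)
    (η : (Fin n → ℝ) → Matrix (Fin n) (Fin n) ℝ)
    (hη : ∀ x, η x = fun i j => x i * x j)
    (μ₁ : Measure (Matrix (Fin n) (Fin n) ℝ))
    (hμ : μ₁ = Measure.map η volume)
    (g : Matrix (Fin n) (Fin n) ℝ) (hg : IsUnit g.det) :
    Measure.map (fun X => g * X * gᵀ) μ₁ = ENNReal.ofReal |g.det|⁻¹ • μ₁ := by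
  have hdet : g.det ≠ 0 := hg.ne_zero
  have hηmeas : Measurable η := by
    rw [show η = fun x => (fun i j => x i * x j) from funext hη]
    exact measurable_pi_lambda _ fun i => measurable_pi_lambda _ fun j =>
      ((measurable_pi_apply i).mul (measurable_pi_apply j))
  have hX : ∀ k l, Measurable fun X : Matrix (Fin n) (Fin n) ℝ => X k l := fun k l =>
    (measurable_pi_apply l).comp (measurable_pi_apply k)
  have hTmeas : Measurable (fun X : Matrix (Fin n) (Fin n) ℝ => g * X * gᵀ) := by
    apply measurable_pi_lambda _ fun i => measurable_pi_lambda _ fun j => ?_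
    simp only [Matrix.mul_apply, Matrix.transpose_apply, Finset.sum_mul]
    exact Finset.measurable_sum _ fun l _ => Finset.measurable_sum _ fun k _ =>
      (((hX k l).const_mul _).mul_const _)
  have hcomp : (fun X : Matrix (Fin n) (Fin n) ℝ => g * X * gᵀ) ∘ η
      = η ∘ (fun x => g.mulVec x) := by
    funext x
    ext i j
    simp only [Function.comp_apply, hη, Matrix.mul_apply, Matrix.transpose_apply,
      Matrix.mulVec, dotProduct, Finset.sum_mul, Finset.mul_sum]
    change ∑ k, (∑ l, g i l * (x l * x k)) * g j k = _
    simp only [Finset.sum_mul]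
    exact Finset.sum_congr rfl fun k _ => Finset.sum_congr rfl fun l _ => by ring
  have hmv : Measurable (fun x : Fin n → ℝ => g.mulVec x) := by
    apply measurable_pi_lambda _ fun i => ?_
    simp only [Matrix.mulVec, dotProduct]
    exact Finset.measurable_sum _ fun k _ => (measurable_pi_apply k).const_mul _
  have hmulvec : Measure.map (fun x : Fin n → ℝ => g.mulVec x) volume
      = ENNReal.ofReal |g.det|⁻¹ • volume := by
    rw [show (fun x : Fin n → ℝ => g.mulVec x) = ⇑(Matrix.toLin' g) by
      funext x; simp [Matrix.toLin'_apply]]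
    rw [Real.map_matrix_volume_pi_eq_smul_volume_pi hdet, abs_inv]
  rw [hμ, Measure.map_map hTmeas hηmeas, hcomp, ← Measure.map_map hηmeas hmv,
    hmulvec, Measure.map_smul]
end

section
/- For g = [[a,b],[c,d]] ∈ SL(n,ℝ) written in blocks with a ∈ ℝ, b ∈ ℝ^{1×(n−1)}, c ∈ ℝ^{(n−1)×1}, d ∈ ℝ^{(n−1)×(n−1)}, and x ∈ ℝ^{n−1} with a + bx ≠ 0, one has the factorization g·[[1,0],[x,I]] = n̄·m·a₀·n, where n̄ = [[1,0],[(c+dx)/(a+bx), I]], m = [[(a+bx)/|a+bx|, 0],[0, |a+bx|^{1/(n−1)}(d − ((c+dx)/(a+bx))b)]], a₀ = [[|a+bx|, 0],[0, |a+bx|^{−1/(n−1)}I]], and n = [[1, bᵗ/(a+bx)],[0, I]]. -/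
open Matrix

theorem bruhat_factorisation (m : ℕ) (hm : 1 ≤ m)
    (a : ℝ) (b : Matrix (Fin 1) (Fin m) ℝ) (c : Matrix (Fin m) (Fin 1) ℝ)
    (d : Matrix (Fin m) (Fin m) ℝ) (x : Matrix (Fin m) (Fin 1) ℝ)
    (hdet : (Matrix.fromBlocks (a • 1) b c d).det = 1)
    (s : ℝ) (hs : s = a + (b * x) 0 0) (hs0 : s ≠ 0) :
    Matrix.fromBlocks (a • 1) b c d * Matrix.fromBlocks 1 0 x 1 =
      Matrix.fromBlocks 1 0 (s⁻¹ • (c + d * x)) 1 *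
        Matrix.fromBlocks ((s / |s|) • 1) 0 0
          ((|s| ^ ((1 : ℝ) / m)) • (d - s⁻¹ • ((c + d * x) * b))) *
        Matrix.fromBlocks (|s| • 1) 0 0 ((|s| ^ (-(1 : ℝ) / m)) • 1) *
        Matrix.fromBlocks 1 (s⁻¹ • b) 0 1 := by
  have hpos : (0:ℝ) < |s| := abs_pos.mpr hs0
  have h1 : |s| ^ (-(1:ℝ)/m) * |s| ^ ((1:ℝ)/m) = 1 := by
    rw [← Real.rpow_add hpos]; ring_nf; exact Real.rpow_zero _
  have e1 : |s| * (s / |s|) = s := by field_simp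
  have e2 : s⁻¹ * (|s| * (s / |s|)) = 1 := by rw [e1]; exact inv_mul_cancel₀ hs0
  have e3 : |s| * (s / |s| * s⁻¹) = 1 := by
    rw [← mul_assoc, e1]; exact mul_inv_cancel₀ hs0
  have e4 : s⁻¹ * (|s| * (s / |s| * s⁻¹)) = s⁻¹ := by rw [e3, mul_one]
  simp only [Matrix.fromBlocks_multiply, Matrix.mul_one, Matrix.one_mul, Matrix.mul_zero,
    Matrix.zero_mul, add_zero, zero_add, Matrix.smul_mul, Matrix.mul_smul, smul_smul,
    zero_smul, smul_zero, one_mul, mul_one, e1, e2, e3, e4, h1, one_smul]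
  rw [inv_mul_cancel₀ hs0, one_smul]
  have hA : a • (1 : Matrix (Fin 1) (Fin 1) ℝ) + b * x = s • 1 := by
    ext i j; fin_cases i; fin_cases j; simp [hs, Matrix.one_apply]
  have hD : s⁻¹ • ((c + d * x) * b) + (d - s⁻¹ • ((c + d * x) * b)) = d := by abel
  rw [hA, hD]
end
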